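/- Let Q be a finite connected quiver and k a field, and let A = kQ/J² be the radical square zero algebra, i.e. the path algebra of Q modulo the ideal J² generated by all paths of length 2. Assume Q has at least one arrow and is not the quiver with a single vertex and a single loop. Then the center Z(A) has k-dimension equal to 1 + ℓ, where ℓ is the number of loops of Q (arrows a with s(a) = t(a)); a basis is given by the unit 1 together with the residue classes of the loops. -/

import Mathlib

/-- A finite quiver: finite sets of vertices and arrows with source/target maps. -/
structure FinQuiver where
  V : Type
  E : Type
  [fV : Fintype V]
  [fE : Fintype E]
  s : E → V
  t : E → V

attribute [instance] FinQuiver.fV FinQuiver.fE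

/-- The underlying undirected graph of a quiver. -/
def FinQuiver.graph (Q : FinQuiver) : SimpleGraph Q.V :=
  SimpleGraph.fromRel (fun x y => ∃ a, Q.s a = x ∧ Q.t a = y)

/-- A quiver is connected if its underlying undirected graph is connected. -/
def FinQuiver.Connected (Q : FinQuiver) : Prop := Q.graph.Connected

/-!
A central element `x = ∑ cᵥ eᵥ + ∑ dₐ a` is pinned down by two coefficient comparisons. The
coefficient of an arrow `a` in `e (s a) * x = x * e (s a)` is `0` on the left unless `a` is a loop
and `dₐ` on the right, so only loops survive; the coefficient of `a` in `a * x = x * a` is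
`c (s a) = c (t a)`, so by connectedness all `cᵥ` agree and the vertex part is a multiple of
`1 = ∑ eᵥ`. Conversely `1` and the loops commute with every basis vector.
-/
open Module Submodule

theorem SimpleGraph.Reachable.apply_eq_of_adj {V β : Type*} {G : SimpleGraph V} {f : V → β}
    (hf : ∀ u v, G.Adj u v → f u = f v) {u v : V} (h : G.Reachable u v) : f u = f v := by
  obtain ⟨p⟩ := h
  induction p with
  | nil => rfl
  | cons hadj _ ih => exact (hf _ _ hadj).trans ih

theorem Module.Basis.repr_mul_apply {ι R A : Type*} [Fintype ι] [CommSemiring R] [Semiring A]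
    [Algebra R A] (b : Basis ι R A) (x y : A) (m : ι) :
    b.repr (x * y) m = ∑ i, ∑ j, b.repr x i * b.repr y j * b.repr (b i * b j) m := by
  conv_lhs => rw [← b.sum_repr x, ← b.sum_repr y]
  simp only [Finset.sum_mul, Finset.mul_sum, smul_mul_smul_comm, map_sum, map_smul,
    Finsupp.coe_finsetSum, Finset.sum_apply, Finsupp.smul_apply, smul_eq_mul]
  exact Finset.sum_comm

open Classical in
/-- Paths compose right to left: `e (t a) * a = a = a * e (s a)`. -/
structure FinQuiver.IsRadSqZeroBasis (Q : FinQuiver) {k A : Type*} [CommRing k] [Ring A]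
    [Algebra k A] (b : Basis (Q.V ⊕ Q.E) k A) : Prop where
  vertex_mul_vertex : ∀ v w, b (.inl v) * b (.inl w) = if v = w then b (.inl v) else 0
  vertex_mul_arrow : ∀ v a, b (.inl v) * b (.inr a) = if v = Q.t a then b (.inr a) else 0
  arrow_mul_vertex : ∀ a v, b (.inr a) * b (.inl v) = if v = Q.s a then b (.inr a) else 0
  arrow_mul_arrow : ∀ a c, b (.inr a) * b (.inr c) = 0
  one_eq_sum : (1 : A) = ∑ v, b (.inl v)

namespace FinQuiver.IsRadSqZeroBasis
variable {Q : FinQuiver} {k A : Type*} [CommRing k] [Ring A] [Algebra k A]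
  {b : Basis (Q.V ⊕ Q.E) k A}

theorem repr_mul_source_arrow (hb : Q.IsRadSqZeroBasis b) (x : A) (a : Q.E) :
    b.repr (x * b (.inl (Q.s a))) (.inr a) = b.repr x (.inr a) := by
  classical
  rw [Basis.repr_mul_apply, Fintype.sum_eq_single (.inr a)]
  · simp [Finsupp.single_apply, hb.arrow_mul_vertex]
  · rintro (v | c) hc <;>
      simp_all [Finsupp.single_apply, hb.vertex_mul_vertex, hb.arrow_mul_vertex, apply_ite, ite_apply]

theorem repr_vertex_mul_arrow_of_ne (hb : Q.IsRadSqZeroBasis b) (x : A) {w : Q.V} {a : Q.E}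
    (h : Q.t a ≠ w) : b.repr (b (.inl w) * x) (.inr a) = 0 := by
  classical
  refine (Basis.repr_mul_apply ..).trans (Fintype.sum_eq_zero _ fun i => Fintype.sum_eq_zero _ ?_)
  rintro (v | c) <;> grind [hb.vertex_mul_vertex, hb.vertex_mul_arrow, Basis.repr_self]

theorem repr_mul_arrow_self (hb : Q.IsRadSqZeroBasis b) (x : A) (a : Q.E) :
    b.repr (x * b (.inr a)) (.inr a) = b.repr x (.inl (Q.t a)) := by
  classical
  rw [Basis.repr_mul_apply]
  simp [Finsupp.single_apply, Fintype.sum_sum_type, hb.vertex_mul_arrow, hb.arrow_mul_arrow,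
    apply_ite, ite_apply]

theorem repr_arrow_mul_self (hb : Q.IsRadSqZeroBasis b) (x : A) (a : Q.E) :
    b.repr (b (.inr a) * x) (.inr a) = b.repr x (.inl (Q.s a)) := by
  classical
  rw [Basis.repr_mul_apply]
  simp [Finsupp.single_apply, Fintype.sum_sum_type, hb.arrow_mul_vertex, hb.arrow_mul_arrow,
    apply_ite, ite_apply]

theorem repr_one_inl (hb : Q.IsRadSqZeroBasis b) (v : Q.V) : b.repr 1 (.inl v) = 1 := by
  classical
  simp [hb.one_eq_sum, Finsupp.single_apply]

theorem repr_one_inr (hb : Q.IsRadSqZeroBasis b) (a : Q.E) : b.repr 1 (.inr a) = 0 := by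
  simp [hb.one_eq_sum]

theorem arrow_mem_center (hb : Q.IsRadSqZeroBasis b) {a : Q.E} (ha : Q.s a = Q.t a) :
    b (.inr a) ∈ Subalgebra.center k A := by
  refine b.mem_center_iff.2 ⟨fun i => ?_, fun i j => ⟨(mul_assoc ..).symm, mul_assoc ..⟩⟩
  rcases i with v | c
  · rw [Commute, SemiconjBy, hb.vertex_mul_arrow, hb.arrow_mul_vertex, ha]
  · rw [Commute, SemiconjBy, hb.arrow_mul_arrow, hb.arrow_mul_arrow]

variable {x : A}

theorem repr_arrow_eq_zero_of_mem_center (hb : Q.IsRadSqZeroBasis b)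
    (hx : x ∈ Subalgebra.center k A) {a : Q.E} (ha : Q.s a ≠ Q.t a) : b.repr x (.inr a) = 0 := by
  rw [← hb.repr_mul_source_arrow, ← Subalgebra.mem_center_iff.1 hx _,
    hb.repr_vertex_mul_arrow_of_ne _ (Ne.symm ha)]

theorem repr_source_eq_repr_target_of_mem_center (hb : Q.IsRadSqZeroBasis b)
    (hx : x ∈ Subalgebra.center k A) (a : Q.E) :
    b.repr x (.inl (Q.s a)) = b.repr x (.inl (Q.t a)) := by
  rw [← hb.repr_arrow_mul_self, ← hb.repr_mul_arrow_self, Subalgebra.mem_center_iff.1 hx _]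

theorem repr_vertex_eq_of_mem_center (hb : Q.IsRadSqZeroBasis b) (hQ : Q.Connected)
    (hx : x ∈ Subalgebra.center k A) (u v : Q.V) : b.repr x (.inl u) = b.repr x (.inl v) := by
  refine (hQ.preconnected u v).apply_eq_of_adj (f := fun v => b.repr x (.inl v)) fun u v huv => ?_
  obtain ⟨-, ⟨a, rfl, rfl⟩ | ⟨a, rfl, rfl⟩⟩ := huv
  exacts [hb.repr_source_eq_repr_target_of_mem_center hx a,
    (hb.repr_source_eq_repr_target_of_mem_center hx a).symm]

theorem mem_span_of_mem_center (hb : Q.IsRadSqZeroBasis b) (hQ : Q.Connected)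
    (hx : x ∈ Subalgebra.center k A) :
    x ∈ span k (insert 1 (Set.range fun a : {a : Q.E // Q.s a = Q.t a} => b (.inr a.1))) := by
  obtain ⟨v₀⟩ := hQ.nonempty
  have hvertices : ∑ v, b.repr x (.inl v) • b (.inl v) = b.repr x (.inl v₀) • (1 : A) := by
    rw [hb.one_eq_sum, Finset.smul_sum]
    exact Finset.sum_congr rfl fun v _ => by rw [hb.repr_vertex_eq_of_mem_center hQ hx v v₀]
  rw [← b.sum_repr x, Fintype.sum_sum_type, hvertices]
  refine add_mem (smul_mem _ _ (subset_span (Set.mem_insert _ _))) (sum_mem fun a _ => ?_)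
  by_cases ha : Q.s a = Q.t a
  · exact smul_mem _ _ (subset_span (Set.mem_insert_of_mem _ ⟨⟨a, ha⟩, rfl⟩))
  · simp [hb.repr_arrow_eq_zero_of_mem_center hx ha]

theorem center_eq_span (hb : Q.IsRadSqZeroBasis b) (hQ : Q.Connected) :
    Subalgebra.toSubmodule (Subalgebra.center k A) =
      span k (insert 1 (Set.range fun a : {a : Q.E // Q.s a = Q.t a} => b (.inr a.1))) := by
  refine le_antisymm (fun x hx => hb.mem_span_of_mem_center hQ hx) ?_
  rw [span_le, Set.insert_subset_iff, Set.range_subset_iff]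
  exact ⟨Subalgebra.one_mem _, fun a => hb.arrow_mem_center a.2⟩

theorem linearIndependent_one_loops [Nontrivial k] [Nonempty Q.V] (hb : Q.IsRadSqZeroBasis b) :
    LinearIndependent k
      (Sum.elim (fun _ : Unit => (1 : A)) fun a : {a : Q.E // Q.s a = Q.t a} => b (.inr a.1)) := by
  classical
  obtain ⟨v₀⟩ := ‹Nonempty Q.V›
  rw [Fintype.linearIndependent_iff]
  rintro g hg (⟨⟩ | a)
  · simpa [hb.repr_one_inl, Finsupp.single_apply] using congr(b.repr $hg (.inl v₀))
  · simpa [hb.repr_one_inr, Finsupp.single_apply, Subtype.val_inj]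
      using congr(b.repr $hg (.inr a.1))

theorem finrank_center [Nontrivial k] (hb : Q.IsRadSqZeroBasis b) (hQ : Q.Connected) :
    finrank k (Subalgebra.center k A) = 1 + Nat.card {a : Q.E // Q.s a = Q.t a} := by
  classical
  have := hQ.nonempty
  have hrange : insert (1 : A) (Set.range fun a : {a : Q.E // Q.s a = Q.t a} => b (.inr a.1)) =
      Set.range (Sum.elim (fun _ : Unit => (1 : A))
        fun a : {a : Q.E // Q.s a = Q.t a} => b (.inr a.1)) := by
    rw [Set.Sum.elim_range, Set.range_const, Set.singleton_union]
  change finrank k (Subalgebra.toSubmodule (Subalgebra.center k A)) = _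
  rw [hb.center_eq_span hQ, hrange, finrank_span_eq_card hb.linearIndependent_one_loops,
    ← Nat.card_eq_fintype_card, Nat.card_sum, Nat.card_unique]

end FinQuiver.IsRadSqZeroBasis

theorem stmt14_general (k : Type) [Field k] (Q : FinQuiver)
    (hconn : Q.Connected)
    (A : Type) [Ring A] [Algebra k A]
    (b : Module.Basis (Q.V ⊕ Q.E) k A)
    (hvv_eq : ∀ v : Q.V, b (Sum.inl v) * b (Sum.inl v) = b (Sum.inl v))
    (hvv_ne : ∀ v w : Q.V, v ≠ w → b (Sum.inl v) * b (Sum.inl w) = 0)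
    (hva_eq : ∀ (v : Q.V) (a : Q.E), v = Q.t a → b (Sum.inl v) * b (Sum.inr a) = b (Sum.inr a))
    (hva_ne : ∀ (v : Q.V) (a : Q.E), v ≠ Q.t a → b (Sum.inl v) * b (Sum.inr a) = 0)
    (hav_eq : ∀ (a : Q.E) (v : Q.V), v = Q.s a → b (Sum.inr a) * b (Sum.inl v) = b (Sum.inr a))
    (hav_ne : ∀ (a : Q.E) (v : Q.V), v ≠ Q.s a → b (Sum.inr a) * b (Sum.inl v) = 0)
    (haa : ∀ a c : Q.E, b (Sum.inr a) * b (Sum.inr c) = 0)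
    (hone : (1 : A) = ∑ v : Q.V, b (Sum.inl v)) :
    Module.finrank k (Subalgebra.center k A)
      = 1 + Nat.card {a : Q.E // Q.s a = Q.t a} ∧
    Subalgebra.toSubmodule (Subalgebra.center k A)
      = Submodule.span k
          (insert 1 (Set.range fun a : {a : Q.E // Q.s a = Q.t a} => b (Sum.inr a.1))) := by
  have hb : Q.IsRadSqZeroBasis b :=
    { vertex_mul_vertex := fun v w => by
        split_ifs with h
        exacts [h ▸ hvv_eq v, hvv_ne v w h]
      vertex_mul_arrow := fun v a => by
        split_ifs with h
        exacts [hva_eq v a h, hva_ne v a h]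
      arrow_mul_vertex := fun a v => by
        split_ifs with h
        exacts [hav_eq a v h, hav_ne a v h]
      arrow_mul_arrow := haa
      one_eq_sum := hone }
  exact ⟨hb.finrank_center hconn, hb.center_eq_span hconn⟩

/-- The radical square zero algebra `kQ/J²` of a finite connected quiver `Q`
(with at least one arrow, not a single loop) has center of dimension `1 + ℓ`
where `ℓ` is the number of loops, with basis the unit together with the loops.
Here `A` is any `k`-algebra with basis indexed by vertices and arrows,
multiplying as in `kQ/J²`. -/
theorem stmt14 (k : Type) [Field k] (Q : FinQuiver)
    (hconn : Q.Connected) (harrow : Nonempty Q.E)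
    (hnotloop : ¬ (Fintype.card Q.V = 1 ∧ Fintype.card Q.E = 1))
    (A : Type) [Ring A] [Algebra k A]
    (b : Module.Basis (Q.V ⊕ Q.E) k A)
    (hvv_eq : ∀ v : Q.V, b (Sum.inl v) * b (Sum.inl v) = b (Sum.inl v))
    (hvv_ne : ∀ v w : Q.V, v ≠ w → b (Sum.inl v) * b (Sum.inl w) = 0)
    (hva_eq : ∀ (v : Q.V) (a : Q.E), v = Q.t a → b (Sum.inl v) * b (Sum.inr a) = b (Sum.inr a))
    (hva_ne : ∀ (v : Q.V) (a : Q.E), v ≠ Q.t a → b (Sum.inl v) * b (Sum.inr a) = 0)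
    (hav_eq : ∀ (a : Q.E) (v : Q.V), v = Q.s a → b (Sum.inr a) * b (Sum.inl v) = b (Sum.inr a))
    (hav_ne : ∀ (a : Q.E) (v : Q.V), v ≠ Q.s a → b (Sum.inr a) * b (Sum.inl v) = 0)
    (haa : ∀ a c : Q.E, b (Sum.inr a) * b (Sum.inr c) = 0)
    (hone : (1 : A) = ∑ v : Q.V, b (Sum.inl v)) :
    Module.finrank k (Subalgebra.center k A)
      = 1 + Nat.card {a : Q.E // Q.s a = Q.t a} ∧
    Subalgebra.toSubmodule (Subalgebra.center k A)
      = Submodule.span k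
          (insert 1 (Set.range fun a : {a : Q.E // Q.s a = Q.t a} => b (Sum.inr a.1))) :=
  stmt14_general k Q hconn A b hvv_eq hvv_ne hva_eq hva_ne hav_eq hav_ne haa hone
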